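/- arXiv:2210.14247 — 2 statements merged into one kernel-verified Lean document; each statement's English description precedes it below -/
import Mathlib

section
/- For all A, B, C ∈ evZ: (i) rows(A ⊘ B) = rows(A) + rows(B); (ii) cols(A ⊘ B) = cols(A) + cols(B); (iii) (A ⊘ B) ⊘ C = A ⊘ (B ⊘ C); (iv) ς(A ⊘ B) = ς(A) ⊠ ς(B). -/
open scoped Classical

namespace TwoParam

/-! ### The free commutative monoid on `d` generators, written additively -/

abbrev Md (d : ℕ) := Fin d →₀ ℕ

/-! ### Raw matrices over `Md d` and matrix compositions

A raw matrix is a function `ℕ → ℕ → Md d` together with a number of rows and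
columns, normalized to be `0` (= the neutral element `ε`) outside the range.
The empty composition is the `0 × 0` matrix. -/

structure RawMat (d : ℕ) where
  rows : ℕ
  cols : ℕ
  entry : ℕ → ℕ → Md d
  entry_eq_zero : ∀ i j : ℕ, rows ≤ i ∨ cols ≤ j → entry i j = 0

namespace RawMat

variable {d : ℕ}

/-- A matrix composition: no row and no column consists entirely of `ε`.
(The empty `0 × 0` matrix vacuously satisfies this.) -/
def IsComp (a : RawMat d) : Prop :=
  (∀ i < a.rows, ∃ j < a.cols, a.entry i j ≠ 0) ∧
  (∀ j < a.cols, ∃ i < a.rows, a.entry i j ≠ 0)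

/-- The empty composition. -/
def empty (d : ℕ) : RawMat d := ⟨0, 0, fun _ _ => 0, fun _ _ _ => rfl⟩

/-- Diagonal block concatenation of two matrices. -/
def diag (a b : RawMat d) : RawMat d where
  rows := a.rows + b.rows
  cols := a.cols + b.cols
  entry := fun i j =>
    if i < a.rows ∧ j < a.cols then a.entry i j
    else if a.rows ≤ i ∧ a.cols ≤ j then b.entry (i - a.rows) (j - a.cols)
    else 0
  entry_eq_zero := by
    intro i j h
    split_ifs with h1 h2
    · exact absurd h (by omega)
    · exact b.entry_eq_zero _ _ (by omega)
    · rfl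

/-- A non-empty composition is connected if it admits no nontrivial
block-diagonal decomposition into compositions. -/
def Connected (a : RawMat d) : Prop :=
  a.IsComp ∧ a ≠ empty d ∧
    ∀ b c : RawMat d, b.IsComp → c.IsComp → a = b.diag c →
      b = empty d ∨ c = empty d

/-- Total weight of a matrix: the homomorphism `Md d → ℕ` sending every
generator to `1`, summed over all entries. -/
def weight (a : RawMat d) : ℕ :=
  ∑ i ∈ Finset.range a.rows, ∑ j ∈ Finset.range a.cols,
    (a.entry i j).sum fun _ e => e

end RawMat

/-! ### Evaluation of monomials -/

/-- For `z ∈ R^d` and `m ∈ Md d`, the evaluation `z^(m) = ∏ j, z j ^ m j`. -/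
def evalMon {d : ℕ} {R : Type*} [CommRing R] (z : Fin d → R) (m : Md d) : R :=
  m.prod fun j e => z j ^ e

/-! ### Two-parameter sums signature -/

/-- Strictly increasing chains of length `m` with values in `[lo, hi)`
(0-based indexing of the data). -/
noncomputable def chainsB (m lo hi : ℕ) : Finset (Fin m → ℕ) :=
  (Fintype.piFinset fun _ : Fin m => Finset.Ico lo hi).filter StrictMono

/-- The bounded two-parameter sums signature coefficient `⟨SS_{l;r}(Z), a⟩`. -/
noncomputable def SSb {d : ℕ} {R : Type*} [CommRing R]
    (Z : ℕ × ℕ → Fin d → R) (l r : ℕ × ℕ) (a : RawMat d) : R :=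
  ∑ ι ∈ chainsB a.rows l.1 r.1, ∑ κ ∈ chainsB a.cols l.2 r.2,
    ∏ s : Fin a.rows, ∏ t : Fin a.cols, evalMon (Z (ι s, κ t)) (a.entry s t)

/-- The (unbounded) two-parameter sums signature coefficient `⟨SS(Z), a⟩`,
for finitely supported `Z` a finite sum. -/
noncomputable def SSc {d : ℕ} {R : Type*} [CommRing R]
    (Z : ℕ × ℕ → Fin d → R) (a : RawMat d) : R :=
  ∑ᶠ ι ∈ {f : Fin a.rows → ℕ | StrictMono f},
    ∑ᶠ κ ∈ {g : Fin a.cols → ℕ | StrictMono g},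
      ∏ s : Fin a.rows, ∏ t : Fin a.cols, evalMon (Z (ι s, κ t)) (a.entry s t)

/-! ### Quasi-shuffle surjections -/

/-- `qShSet m s j`: surjections `{1,…,m+s} ↠ {1,…,j}` that are strictly
increasing on the first `m` and on the last `s` arguments. -/
noncomputable def qShSet (m s j : ℕ) : Finset (Fin (m + s) → Fin j) :=
  Finset.univ.filter fun q =>
    Function.Surjective q ∧
    (∀ u v : Fin (m + s), u < v → (v : ℕ) < m → q u < q v) ∧
    (∀ u v : Fin (m + s), u < v → m ≤ (u : ℕ) → q u < q v)

/-- The summand `c^{p,q}` of the two-parameter quasi-shuffle: the `j × k`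
matrix with entries `⋆_{u ∈ p⁻¹(x), v ∈ q⁻¹(y)} diag(a,b)_{u,v}`. -/
noncomputable def qshMat {d : ℕ} (a b : RawMat d) {j k : ℕ}
    (p : Fin (a.rows + b.rows) → Fin j) (q : Fin (a.cols + b.cols) → Fin k) :
    RawMat d where
  rows := j
  cols := k
  entry := fun x y =>
    if hx : x < j then
      if hy : y < k then
        ∑ u ∈ Finset.univ.filter (fun u => p u = ⟨x, hx⟩),
          ∑ v ∈ Finset.univ.filter (fun v => q v = ⟨y, hy⟩),
            (a.diag b).entry u v
      else 0
    else 0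
  entry_eq_zero := by
    intro x y h
    split_ifs with hx hy
    · exact absurd h (by omega)
    · rfl
    · rfl

/-- The two-parameter quasi-shuffle `a ⧢ b`, as an element of the free
`R`-module on matrices.  (The empty index sets for `j` or `k` outside
`[0, rows+rows]` resp. `[0, cols+cols]` implement the conventions
`e ⧢ a = a ⧢ e = a` and `e ⧢ e = e`.) -/
noncomputable def qsh {d : ℕ} (R : Type*) [CommRing R] (a b : RawMat d) :
    RawMat d →₀ R :=
  ∑ j ∈ Finset.range (a.rows + b.rows + 1),
    ∑ k ∈ Finset.range (a.cols + b.cols + 1),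
      ∑ p ∈ qShSet a.rows b.rows j,
        ∑ q ∈ qShSet a.cols b.cols k,
          Finsupp.single (qshMat a b p q) 1

/-- Bilinear extension of the quasi-shuffle to the free module. -/
noncomputable def qshL {d : ℕ} {R : Type*} [CommRing R]
    (F G : RawMat d →₀ R) : RawMat d →₀ R :=
  F.sum fun a ra => G.sum fun b rb => (ra * rb) • qsh R a b

/-! ### Two-parameter data: eventually zero / eventually constant functions -/

variable {V : Type*}

/-- Eventually zero two-parameter data: finite support. -/
def EvZ [Zero V] (X : ℕ × ℕ → V) : Prop := (Function.support X).Finite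

/-- Eventually constant two-parameter data: there is a box outside of which
`X` is constant; i.e. whenever two values differ, one of the two indices lies
in the box. -/
def EvC (X : ℕ × ℕ → V) : Prop :=
  ∃ n : ℕ × ℕ, ∀ i j : ℕ × ℕ, X i ≠ X j →
    (i.1 ≤ n.1 ∧ i.2 ≤ n.2) ∨ (j.1 ≤ n.1 ∧ j.2 ≤ n.2)

/-- The coordinate of `i` along the axis `a` (axis `0` = rows, `1` = cols). -/
def axC (a : Fin 2) (i : ℕ × ℕ) : ℕ := if a = 0 then i.1 else i.2

/-- Shift an index one step down along the axis `a`. -/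
def shiftD (a : Fin 2) (i : ℕ × ℕ) : ℕ × ℕ :=
  if a = 0 then (i.1 - 1, i.2) else (i.1, i.2 - 1)

/-- The zero insertion operator (0-based position `k`): insert a zero
row/column at position `k` along axis `a`. -/
def zeroIns [Zero V] (a : Fin 2) (k : ℕ) (X : ℕ × ℕ → V) : ℕ × ℕ → V :=
  fun i => if axC a i < k then X i else if axC a i = k then 0 else X (shiftD a i)

/-- The warping operator (0-based position `k`): duplicate the row/column at
position `k` along axis `a`. -/
def warp (a : Fin 2) (k : ℕ) (X : ℕ × ℕ → V) : ℕ × ℕ → V :=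
  fun i => if axC a i ≤ k then X i else X (shiftD a i)

/-- The two-parameter (forward) difference operator `δ`. -/
def diffOp [AddCommGroup V] (X : ℕ × ℕ → V) : ℕ × ℕ → V := fun i =>
  X (i.1 + 1, i.2 + 1) - X (i.1 + 1, i.2) - X (i.1, i.2 + 1) + X (i.1, i.2)

/-- The summation operator `ς`, a right inverse of `δ`:
`(ς Z)_{i,j} = Σ_{s ≥ i} Σ_{t ≥ j} Z_{s,t}`. -/
noncomputable def sigmaOp [AddCommMonoid V] (Z : ℕ × ℕ → V) : ℕ × ℕ → V :=
  fun i => ∑ᶠ p ∈ {p : ℕ × ℕ | i.1 ≤ p.1 ∧ i.2 ≤ p.2}, Z p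

/-- The set of all `n ∈ ℕ²` such that `X` is determined inside the
`n.1 × n.2` upper-left box (0-based size/count convention). -/
def sizeSetC (X : ℕ × ℕ → V) : Set (ℕ × ℕ) :=
  {n | ∀ i j : ℕ × ℕ, X i ≠ X j →
    (i.1 < n.1 ∧ i.2 < n.2) ∨ (j.1 < n.1 ∧ j.2 < n.2)}

/-- `rows(X)` for eventually constant `X`: first component of the least
element of `sizeSetC X`. -/
noncomputable def rowsC (X : ℕ × ℕ → V) : ℕ := sInf (Prod.fst '' sizeSetC X)

/-- `cols(X)` for eventually constant `X`. -/
noncomputable def colsC (X : ℕ × ℕ → V) : ℕ := sInf (Prod.snd '' sizeSetC X)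

/-- `rows(Z)` for eventually zero `Z`, defined via the support. -/
noncomputable def rowsZ [Zero V] (Z : ℕ × ℕ → V) : ℕ :=
  sInf {m : ℕ | ∀ i : ℕ × ℕ, Z i ≠ 0 → i.1 < m}

/-- `cols(Z)` for eventually zero `Z`, defined via the support. -/
noncomputable def colsZ [Zero V] (Z : ℕ × ℕ → V) : ℕ :=
  sInf {m : ℕ | ∀ i : ℕ × ℕ, Z i ≠ 0 → i.2 < m}

/-- Diagonal concatenation `A ⊘ B` on eventually zero functions,
with `rows`/`cols` taken in the eventually-constant sense. -/
noncomputable def dconc [AddCommGroup V] (A B : ℕ × ℕ → V) : ℕ × ℕ → V :=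
  A + (zeroIns 0 0)^[rowsC A] ((zeroIns 1 0)^[colsC A] B)

/-- Diagonal concatenation `A ⊘ B` on eventually zero functions,
with `rows`/`cols` taken in the support sense. -/
noncomputable def dconcZ [AddCommGroup V] (A B : ℕ × ℕ → V) : ℕ × ℕ → V :=
  A + (zeroIns 0 0)^[rowsZ A] ((zeroIns 1 0)^[colsZ A] B)

/-- Concatenation along the diagonal `X ⊠ Y` on eventually constant
functions: `ς(δX) + Warp_{1,1}^{rows X}(Warp_{2,1}^{cols X}(Y))`. -/
noncomputable def bconc [AddCommGroup V] (X Y : ℕ × ℕ → V) : ℕ × ℕ → V :=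
  sigmaOp (diffOp X) + (warp 0 0)^[rowsC X] ((warp 1 0)^[colsC X] Y)


/-! ### Two-parameter quasisymmetric functions -/

/-- Monomials in the commuting variables `x_{i,j}`, `(i,j) ∈ ℕ × ℕ`. -/
abbrev Mon := (ℕ × ℕ) →₀ ℕ

/-- Total degree of a monomial. -/
def mdeg (m : Mon) : ℕ := m.sum fun _ e => e

/-- A formal power series (given by its coefficient function) has finite
total degree. -/
def FinDeg {R : Type*} [Zero R] (f : Mon → R) : Prop :=
  ∃ D : ℕ, ∀ m : Mon, f m ≠ 0 → mdeg m ≤ D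

/-- `ℕ₀`-valued raw matrices, normalized to vanish outside the range. -/
structure NMat where
  rows : ℕ
  cols : ℕ
  entry : ℕ → ℕ → ℕ
  entry_eq_zero : ∀ i j : ℕ, rows ≤ i ∨ cols ≤ j → entry i j = 0

namespace NMat

/-- An `ℕ₀`-matrix composition: no zero row and no zero column. -/
def IsComp (a : NMat) : Prop :=
  (∀ i < a.rows, ∃ j < a.cols, a.entry i j ≠ 0) ∧
  (∀ j < a.cols, ∃ i < a.rows, a.entry i j ≠ 0)

/-- The empty composition. -/
def empty : NMat := ⟨0, 0, fun _ _ => 0, fun _ _ _ => rfl⟩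

/-- Diagonal block concatenation. -/
def diag (a b : NMat) : NMat where
  rows := a.rows + b.rows
  cols := a.cols + b.cols
  entry := fun i j =>
    if i < a.rows ∧ j < a.cols then a.entry i j
    else if a.rows ≤ i ∧ a.cols ≤ j then b.entry (i - a.rows) (j - a.cols)
    else 0
  entry_eq_zero := by
    intro i j h
    split_ifs with h1 h2
    · exact absurd h (by omega)
    · exact b.entry_eq_zero _ _ (by omega)
    · rfl

end NMat

/-- The monomial `∏_{s,t} x_{ι_s, κ_t}^{a_{s,t}}` attached to a matrix `a`
and chains `ι`, `κ`. -/
noncomputable def monomialOf (a : NMat) (ι : Fin a.rows → ℕ) (κ : Fin a.cols → ℕ) : Mon :=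
  ∑ s : Fin a.rows, ∑ t : Fin a.cols, Finsupp.single (ι s, κ t) (a.entry s t)

/-- The monomial quasisymmetric function `M_a` (as a coefficient function):
each monomial `∏ x_{ι_s,κ_t}^{a_{s,t}}` for strictly increasing chains occurs
with coefficient `1`.  In particular `M_e = 1`. -/
noncomputable def monQ {R : Type*} [CommRing R] (a : NMat) : Mon → R := fun m =>
  if ∃ (ι : Fin a.rows → ℕ) (κ : Fin a.cols → ℕ),
      StrictMono ι ∧ StrictMono κ ∧ m = monomialOf a ι κ
  then 1 else 0

/-- Two-parameter quasisymmetric function: finite degree, and for every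
matrix composition `a` and all strictly increasing chains `ι`, `κ`, the
coefficients of `∏ x_{ι_s,κ_t}^{a_{s,t}}` and of `∏ x_{s,t}^{a_{s,t}}`
coincide. -/
def IsQSym {R : Type*} [CommRing R] (f : Mon → R) : Prop :=
  FinDeg f ∧ ∀ a : NMat, a.IsComp →
    ∀ (ι : Fin a.rows → ℕ) (κ : Fin a.cols → ℕ), StrictMono ι → StrictMono κ →
      f (monomialOf a ι κ) =
        f (monomialOf a (fun s => (s : ℕ)) (fun t => (t : ℕ)))

/-- Product of formal power series (Cauchy product of coefficient
functions). -/
noncomputable def mulF {R : Type*} [CommRing R] (f g : Mon → R) : Mon → R :=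
  fun m => ∑ p ∈ Finset.HasAntidiagonal.antidiagonal m, f p.1 * g p.2

/-- Two-parameter quasisymmetric functions form an `R`-submodule of the
module of coefficient functions. -/
noncomputable def QSymSub (R : Type*) [CommRing R] : Submodule R (Mon → R) where
  carrier := {f | IsQSym f}
  add_mem' := by
    rintro f g ⟨⟨Df, hDf⟩, hf⟩ ⟨⟨Dg, hDg⟩, hg⟩
    refine ⟨⟨max Df Dg, ?_⟩, ?_⟩
    · intro m hm
      by_contra hc
      push_neg at hc
      have h1 : f m = 0 := by
        by_contra h
        have := hDf m h
        omega
      have h2 : g m = 0 := by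
        by_contra h
        have := hDg m h
        omega
      apply hm
      show f m + g m = 0
      rw [h1, h2, add_zero]
    · intro a ha ι κ hι hκ
      show f _ + g _ = f _ + g _
      rw [hf a ha ι κ hι hκ, hg a ha ι κ hι hκ]
  zero_mem' := ⟨⟨0, fun _ hm => absurd rfl hm⟩, fun _ _ _ _ _ _ => rfl⟩
  smul_mem' := by
    rintro c f ⟨⟨Df, hDf⟩, hf⟩
    refine ⟨⟨Df, ?_⟩, ?_⟩
    · intro m hm
      apply hDf
      intro h
      apply hm
      show c • f m = 0
      rw [h, smul_zero]
    · intro a ha ι κ hι hκ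
      show c • f _ = c • f _
      rw [hf a ha ι κ hι hκ]

/-- Index shift used by the free analogue of zero insertion: indices with
coordinate `≥ k` along axis `a` are shifted up by one (axis `0` = rows). -/
def liftIdx (a : Fin 2) (k : ℕ) (i : ℕ × ℕ) : ℕ × ℕ :=
  if a = 0 then (if i.1 < k then i else (i.1 + 1, i.2))
  else (if i.2 < k then i else (i.1, i.2 + 1))

/-- The free analogue of zero insertion on formal power series: the algebra
endomorphism sending `x_i ↦ x_i` for `i_a < k`, `x_i ↦ 0` for `i_a = k` and
`x_i ↦ x_{i - e_a}` for `i_a > k` (0-based position `k`).  On coefficient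
functions it is given by precomposition with the index lift. -/
noncomputable def zeroF {R : Type*} [CommRing R] (a : Fin 2) (k : ℕ)
    (f : Mon → R) : Mon → R :=
  fun m => f (m.mapDomain (liftIdx a k))

/-- The quasi-shuffle summand `c^{p,q}` for `ℕ₀`-matrices. -/
noncomputable def nQshMat (a b : NMat) {j k : ℕ}
    (p : Fin (a.rows + b.rows) → Fin j) (q : Fin (a.cols + b.cols) → Fin k) :
    NMat where
  rows := j
  cols := k
  entry := fun x y =>
    if hx : x < j then
      if hy : y < k then
        ∑ u ∈ Finset.univ.filter (fun u => p u = ⟨x, hx⟩),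
          ∑ v ∈ Finset.univ.filter (fun v => q v = ⟨y, hy⟩),
            (a.diag b).entry u v
      else 0
    else 0
  entry_eq_zero := by
    intro x y h
    split_ifs with hx hy
    · exact absurd h (by omega)
    · rfl
    · rfl

/-- One-dimensional two-parameter sums signature coefficient `⟨SS(Z), a⟩`. -/
noncomputable def SScN {K : Type*} [CommRing K] (Z : ℕ × ℕ → K) (a : NMat) : K :=
  ∑ᶠ ι ∈ {f : Fin a.rows → ℕ | StrictMono f},
    ∑ᶠ κ ∈ {g : Fin a.cols → ℕ | StrictMono g},
      ∏ s : Fin a.rows, ∏ t : Fin a.cols, Z (ι s, κ t) ^ a.entry s t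

/-- Evaluation of a formal power series at finitely supported data. -/
noncomputable def evalSeries {K : Type*} [CommRing K] (f : Mon → K)
    (Z : ℕ × ℕ → K) : K :=
  ∑ᶠ m : Mon, f m * m.prod fun i e => Z i ^ e

end TwoParam

/-! On eventually zero data all sizes can be read off the support, and the zero insertions in
`A ⊘ B` just translate `B` by `size A`: `A ⊘ B = A + shift (size A) B`, a sum of two functions
with disjoint supports. Hence sizes add, and associativity reduces to
`shift m ∘ shift n = shift (m + n)`. Summation turns the translation into the warp,
`ς (shift n B) i = ς B (i - n)`, while `δ ∘ ς = id` and `size (ς A) = size A` reduce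
`ς A ⊠ ς B` to the same function `ς A + ς B (· - size A)`. -/

namespace TwoParam

variable {V : Type*}

section Zero

variable [Zero V]

def shift (n : ℕ × ℕ) (X : ℕ × ℕ → V) : ℕ × ℕ → V :=
  fun i => if n ≤ i then X (i - n) else 0

lemma shift_apply_of_le {n i : ℕ × ℕ} (h : n ≤ i) (X : ℕ × ℕ → V) :
    shift n X i = X (i - n) :=
  if_pos h

lemma shift_apply_of_not_le {n i : ℕ × ℕ} (h : ¬n ≤ i) (X : ℕ × ℕ → V) :
    shift n X i = 0 :=
  if_neg h

@[simp]
lemma shift_apply_add (n : ℕ × ℕ) (X : ℕ × ℕ → V) (i : ℕ × ℕ) :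
    shift n X (i + n) = X i := by
  simp [shift]

lemma shift_shift (m n : ℕ × ℕ) (X : ℕ × ℕ → V) :
    shift m (shift n X) = shift (m + n) X := by
  funext i
  by_cases hm : m ≤ i
  · simp only [shift, if_pos hm, le_tsub_iff_right hm, add_comm n m, tsub_tsub]
  · simp only [shift, if_neg hm, if_neg fun h => hm (le_self_add.trans h)]

lemma shift_comp_swap (n : ℕ × ℕ) (X : ℕ × ℕ → V) :
    shift n X ∘ Prod.swap = shift n.swap (X ∘ Prod.swap) := by
  funext i
  simp [shift, Prod.le_def, and_comm]

lemma EvZ.shift {X : ℕ × ℕ → V} (hX : EvZ X) (n : ℕ × ℕ) : EvZ (shift n X) := by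
  refine (hX.image (· + n)).subset fun i hi => ?_
  by_cases h : n ≤ i
  · exact ⟨i - n, by rwa [Function.mem_support, shift_apply_of_le h] at hi,
      tsub_add_cancel_of_le h⟩
  · exact absurd (shift_apply_of_not_le h X) hi

lemma EvZ.comp_swap {X : ℕ × ℕ → V} (hX : EvZ X) : EvZ (X ∘ Prod.swap) :=
  hX.preimage Prod.swap_injective.injOn

lemma rowsZ_le_iff {Z : ℕ × ℕ → V} (hZ : EvZ Z) {m : ℕ} :
    rowsZ Z ≤ m ↔ ∀ i : ℕ × ℕ, m ≤ i.1 → Z i = 0 := by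
  have hiff : ∀ m, (∀ i : ℕ × ℕ, Z i ≠ 0 → i.1 < m) ↔ ∀ i : ℕ × ℕ, m ≤ i.1 → Z i = 0 :=
    fun m => forall_congr' fun i => by rw [← not_le, not_imp_not]
  obtain ⟨N, hN⟩ : BddAbove (Function.support Z) := hZ.bddAbove
  have hne : {m : ℕ | ∀ i : ℕ × ℕ, Z i ≠ 0 → i.1 < m}.Nonempty :=
    ⟨N.1 + 1, fun i hi => Nat.lt_succ_of_le (hN hi).1⟩
  refine ⟨fun h => (hiff m).1 fun i hi => ?_, fun h => Nat.sInf_le ((hiff m).2 h)⟩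
  exact lt_of_lt_of_le (Nat.sInf_mem hne i hi) h

lemma colsZ_eq_rowsZ_comp_swap (Z : ℕ × ℕ → V) : colsZ Z = rowsZ (Z ∘ Prod.swap) := by
  unfold colsZ rowsZ
  congr 1
  ext m
  exact (Prod.swap_surjective.forall).trans (by simp)

lemma max_rowsZ_shift {X : ℕ × ℕ → V} (hX : EvZ X) (r c : ℕ) :
    max r (rowsZ (shift (r, c) X)) = r + rowsZ X := by
  refine eq_of_forall_ge_iff fun m => ?_
  rw [max_le_iff, rowsZ_le_iff (hX.shift _)]
  constructor
  · rintro ⟨hrm, h⟩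
    have : rowsZ X ≤ m - r := (rowsZ_le_iff hX).2 fun j hj => by
      simpa using h (j + (r, c)) (by rw [Prod.fst_add]; omega)
    omega
  · intro h
    have hX0 := (rowsZ_le_iff hX).1 (show rowsZ X ≤ m - r by omega)
    refine ⟨by omega, fun i hi => ?_⟩
    by_cases hri : (r, c) ≤ i
    · rw [shift_apply_of_le hri]
      exact hX0 _ (by rw [Prod.fst_sub]; omega)
    · exact shift_apply_of_not_le hri X

lemma mem_sizeSetC_iff {Z : ℕ × ℕ → V} (hZ : EvZ Z) {n : ℕ × ℕ} :
    n ∈ sizeSetC Z ↔ ∀ i : ℕ × ℕ, Z i ≠ 0 → i.1 < n.1 ∧ i.2 < n.2 := by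
  refine ⟨fun hn i hi => ?_, fun h i j hij => ?_⟩
  · obtain ⟨N, hN⟩ : BddAbove (Function.support Z) := hZ.bddAbove
    have hfar : Z (max n.1 (N.1 + 1), max n.2 (N.2 + 1)) = 0 := by
      by_contra h
      have := (hN h).1
      simp only at this
      omega
    rcases hn i _ (by rwa [hfar]) with h | h
    · exact h
    · simp only at h
      omega
  · by_cases hi : Z i = 0
    · exact Or.inr (h j fun hj => hij (hi.trans hj.symm))
    · exact Or.inl (h i hi)

lemma rowsC_eq_rowsZ {Z : ℕ × ℕ → V} (hZ : EvZ Z) : rowsC Z = rowsZ Z := by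
  obtain ⟨N, hN⟩ : BddAbove (Function.support Z) := hZ.bddAbove
  unfold rowsC rowsZ
  congr 1
  ext m
  simp only [Set.mem_image, mem_sizeSetC_iff hZ]
  refine ⟨?_, fun hm => ⟨(m, N.2 + 1), fun i hi => ⟨hm i hi, Nat.lt_succ_of_le (hN hi).2⟩, rfl⟩⟩
  rintro ⟨n, hn, rfl⟩ i hi
  exact (hn i hi).1

lemma colsC_eq_colsZ {Z : ℕ × ℕ → V} (hZ : EvZ Z) : colsC Z = colsZ Z := by
  obtain ⟨N, hN⟩ : BddAbove (Function.support Z) := hZ.bddAbove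
  unfold colsC colsZ
  congr 1
  ext m
  simp only [Set.mem_image, mem_sizeSetC_iff hZ]
  refine ⟨?_, fun hm => ⟨(N.1 + 1, m), fun i hi => ⟨Nat.lt_succ_of_le (hN hi).1, hm i hi⟩, rfl⟩⟩
  rintro ⟨n, hn, rfl⟩ i hi
  exact (hn i hi).2

@[simp]
lemma shift_zero (X : ℕ × ℕ → V) : shift 0 X = X := by
  funext i
  simp [shift]

lemma zeroIns_zero_zero (X : ℕ × ℕ → V) : zeroIns 0 0 X = shift (1, 0) X := by
  funext i
  simp only [zeroIns, axC, shiftD, shift, Fin.isValue, ↓reduceIte, not_lt_zero, Prod.le_def,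
    zero_le, and_true]
  split_ifs <;> first | rfl | omega

lemma zeroIns_one_zero (X : ℕ × ℕ → V) : zeroIns 1 0 X = shift (0, 1) X := by
  funext i
  simp only [zeroIns, axC, shiftD, shift, Fin.isValue, one_ne_zero, ↓reduceIte, not_lt_zero,
    Prod.le_def, zero_le, true_and]
  split_ifs <;> first | rfl | omega

lemma zeroIns_iterate_zeroIns_iterate (r c : ℕ) (X : ℕ × ℕ → V) :
    (zeroIns 0 0)^[r] ((zeroIns 1 0)^[c] X) = shift (r, c) X := by
  have hrow : ∀ (r : ℕ) (Y : ℕ × ℕ → V), (zeroIns 0 0)^[r] Y = shift (r, 0) Y := by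
    intro r Y
    induction r with
    | zero => exact (shift_zero Y).symm
    | succ r ih =>
      rw [Function.iterate_succ_apply', ih, zeroIns_zero_zero, shift_shift, Prod.mk_add_mk,
        add_comm 1 r, add_zero]
  have hcol : ∀ (c : ℕ) (Y : ℕ × ℕ → V), (zeroIns 1 0)^[c] Y = shift (0, c) Y := by
    intro c Y
    induction c with
    | zero => exact (shift_zero Y).symm
    | succ c ih =>
      rw [Function.iterate_succ_apply', ih, zeroIns_one_zero, shift_shift, Prod.mk_add_mk,
        add_comm 1 c, add_zero]
  rw [hcol, hrow, shift_shift, Prod.mk_add_mk, add_zero, zero_add]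

end Zero

lemma warp_zero_zero (X : ℕ × ℕ → V) : warp 0 0 X = fun i => X (i - (1, 0)) := by
  funext i
  simp only [warp, axC, Fin.isValue, ↓reduceIte, nonpos_iff_eq_zero, shiftD]
  split_ifs with h
  · exact congrArg X (Prod.ext (by rw [Prod.fst_sub]; omega) (by simp))
  · rfl

lemma warp_one_zero (X : ℕ × ℕ → V) : warp 1 0 X = fun i => X (i - (0, 1)) := by
  funext i
  simp only [warp, axC, Fin.isValue, one_ne_zero, ↓reduceIte, nonpos_iff_eq_zero, shiftD]
  split_ifs with h
  · exact congrArg X (Prod.ext (by simp) (by rw [Prod.snd_sub]; omega))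
  · rfl

lemma warp_iterate_warp_iterate (r c : ℕ) (X : ℕ × ℕ → V) :
    (warp 0 0)^[r] ((warp 1 0)^[c] X) = fun i => X (i - (r, c)) := by
  have hrow : ∀ (r : ℕ) (Y : ℕ × ℕ → V), (warp 0 0)^[r] Y = fun i => Y (i - (r, 0)) := by
    intro r Y
    induction r with
    | zero => rfl
    | succ r ih =>
      rw [Function.iterate_succ_apply', ih, warp_zero_zero]
      simp only [tsub_tsub, Prod.mk_add_mk, add_zero, add_comm 1 r]
  have hcol : ∀ (c : ℕ) (Y : ℕ × ℕ → V), (warp 1 0)^[c] Y = fun i => Y (i - (0, c)) := by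
    intro c Y
    induction c with
    | zero => rfl
    | succ c ih =>
      rw [Function.iterate_succ_apply', ih, warp_one_zero]
      simp only [tsub_tsub, Prod.mk_add_mk, add_zero, add_comm 1 c]
  rw [hcol, hrow]
  simp only [tsub_tsub, Prod.mk_add_mk, add_zero, zero_add]

section AddCommMonoid

variable [AddCommMonoid V]

lemma EvZ.add {X Y : ℕ × ℕ → V} (hX : EvZ X) (hY : EvZ Y) : EvZ (X + Y) :=
  (hX.union hY).subset (Function.support_add X Y)

lemma rowsZ_add_of_disjoint {X Y : ℕ × ℕ → V} (hX : EvZ X) (hY : EvZ Y)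
    (hXY : ∀ i, X i = 0 ∨ Y i = 0) : rowsZ (X + Y) = max (rowsZ X) (rowsZ Y) := by
  refine eq_of_forall_ge_iff fun m => ?_
  rw [max_le_iff, rowsZ_le_iff (hX.add hY), rowsZ_le_iff hX, rowsZ_le_iff hY]
  refine ⟨fun h => ⟨fun i hi => ?_, fun i hi => ?_⟩, fun h i hi => ?_⟩
  · rcases hXY i with h0 | h0
    · exact h0
    · simpa [h0] using h i hi
  · rcases hXY i with h0 | h0
    · simpa [h0] using h i hi
    · exact h0
  · simp [h.1 i hi, h.2 i hi]

lemma shift_add (n : ℕ × ℕ) (X Y : ℕ × ℕ → V) : shift n (X + Y) = shift n X + shift n Y := by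
  funext i
  by_cases h : n ≤ i <;> simp [shift, h]

lemma rowsZ_add_shift {A B : ℕ × ℕ → V} (hA : EvZ A) (hB : EvZ B) (c : ℕ) :
    rowsZ (A + shift (rowsZ A, c) B) = rowsZ A + rowsZ B := by
  refine (rowsZ_add_of_disjoint hA (hB.shift _) fun i => ?_).trans (max_rowsZ_shift hB _ c)
  by_cases h : (rowsZ A, c) ≤ i
  · exact Or.inl ((rowsZ_le_iff hA).1 le_rfl i h.1)
  · exact Or.inr (shift_apply_of_not_le h B)

lemma colsZ_add_shift {A B : ℕ × ℕ → V} (hA : EvZ A) (hB : EvZ B) (r : ℕ) :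
    colsZ (A + shift (r, colsZ A) B) = colsZ A + colsZ B := by
  simp only [colsZ_eq_rowsZ_comp_swap, Pi.add_comp, shift_comp_swap, Prod.swap_prod_mk]
  exact rowsZ_add_shift hA.comp_swap hB.comp_swap r

lemma sigmaOp_apply (Z : ℕ × ℕ → V) (i : ℕ × ℕ) : sigmaOp Z i = ∑ᶠ p ∈ Set.Ici i, Z p :=
  rfl

lemma sigmaOp_apply_eq_zero {Z : ℕ × ℕ → V} {i : ℕ × ℕ} (h : ∀ p, i ≤ p → Z p = 0) :
    sigmaOp Z i = 0 :=
  finsum_mem_eq_zero_of_forall_eq_zero h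

lemma EvZ.sigmaOp {Z : ℕ × ℕ → V} (hZ : EvZ Z) : EvZ (sigmaOp Z) := by
  obtain ⟨N, hN⟩ : BddAbove (Function.support Z) := hZ.bddAbove
  refine (Set.finite_Iic N).subset fun i hi => by_contra fun hiN => hi ?_
  exact sigmaOp_apply_eq_zero fun p hp => by_contra fun hp0 => hiN (hp.trans (hN hp0))

lemma sigmaOp_add {X Y : ℕ × ℕ → V} (hX : EvZ X) (hY : EvZ Y) :
    sigmaOp (X + Y) = sigmaOp X + sigmaOp Y :=
  funext fun _ => finsum_mem_add_distrib' (hX.subset Set.inter_subset_right)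
    (hY.subset Set.inter_subset_right)

lemma sigmaOp_shift (n : ℕ × ℕ) (X : ℕ × ℕ → V) :
    sigmaOp (shift n X) = fun i => sigmaOp X (i - n) := by
  funext i
  have hsupp : Set.Ici i ∩ Function.support (shift n X)
      = (· + n) '' Set.Ici (i - n) ∩ Function.support (shift n X) := by
    rw [Set.image_add_const_Ici]
    ext p
    simp only [Set.mem_inter_iff, Set.mem_Ici, Function.mem_support]
    refine and_congr_left fun hp => ?_
    have hnp : n ≤ p := by_contra fun h => hp (shift_apply_of_not_le h X)
    simp only [Prod.le_def, Prod.fst_add, Prod.snd_add, Prod.fst_sub, Prod.snd_sub] at hnp ⊢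
    omega
  rw [sigmaOp_apply, sigmaOp_apply, finsum_mem_inter_support_eq _ _ _ hsupp,
    finsum_mem_image (add_left_injective n).injOn]
  simp

lemma sigmaOp_comp_swap (Z : ℕ × ℕ → V) : sigmaOp (Z ∘ Prod.swap) = sigmaOp Z ∘ Prod.swap := by
  funext i
  refine finsum_mem_eq_of_bijOn Prod.swap
    ⟨fun p hp => ⟨hp.2, hp.1⟩, Prod.swap_injective.injOn, fun q hq => ?_⟩ fun _ _ => rfl
  exact ⟨q.swap, ⟨hq.2, hq.1⟩, q.swap_swap⟩

end AddCommMonoid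

section AddCommGroup

variable [AddCommGroup V]

lemma diffOp_sigmaOp {Z : ℕ × ℕ → V} (hZ : EvZ Z) : diffOp (sigmaOp Z) = Z := by
  funext ⟨i, j⟩
  have hfin : ∀ s : Set (ℕ × ℕ), (s ∩ Function.support Z).Finite :=
    fun s => hZ.subset Set.inter_subset_right
  have hinter : Set.Ici (i + 1, j) ∩ Set.Ici (i, j + 1) = Set.Ici (i + 1, j + 1) := by
    ext p
    simp only [Set.mem_inter_iff, Set.mem_Ici, Prod.le_def]
    omega
  have hinsert : insert (i, j) (Set.Ici (i + 1, j) ∪ Set.Ici (i, j + 1)) = Set.Ici (i, j) := by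
    ext p
    simp only [Set.mem_insert_iff, Set.mem_union, Set.mem_Ici, Prod.le_def, Prod.ext_iff]
    omega
  have hunion := finsum_mem_union_inter' (hfin (Set.Ici (i + 1, j))) (hfin (Set.Ici (i, j + 1)))
  have hsplit := finsum_mem_insert' Z (a := (i, j)) (s := Set.Ici (i + 1, j) ∪ Set.Ici (i, j + 1))
    (by simp [Prod.le_def]) (hfin _)
  rw [hinter] at hunion
  rw [hinsert] at hsplit
  simp only [diffOp, sigmaOp_apply]
  rw [hsplit, eq_sub_of_add_eq hunion]
  abel

lemma rowsZ_sigmaOp {Z : ℕ × ℕ → V} (hZ : EvZ Z) : rowsZ (sigmaOp Z) = rowsZ Z := by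
  refine eq_of_forall_ge_iff fun m => ?_
  rw [rowsZ_le_iff hZ.sigmaOp, rowsZ_le_iff hZ]
  refine ⟨fun h i hi => ?_, fun h i hi => sigmaOp_apply_eq_zero fun p hp => h p (hi.trans hp.1)⟩
  rw [← diffOp_sigmaOp hZ, diffOp, h (i.1 + 1, i.2 + 1) (by dsimp; omega),
    h (i.1 + 1, i.2) (by dsimp; omega), h (i.1, i.2 + 1) hi, h (i.1, i.2) hi]
  simp

lemma colsZ_sigmaOp {Z : ℕ × ℕ → V} (hZ : EvZ Z) : colsZ (sigmaOp Z) = colsZ Z := by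
  rw [colsZ_eq_rowsZ_comp_swap, colsZ_eq_rowsZ_comp_swap, ← sigmaOp_comp_swap,
    rowsZ_sigmaOp hZ.comp_swap]

lemma dconc_eq_add_shift {A : ℕ × ℕ → V} (hA : EvZ A) (B : ℕ × ℕ → V) :
    dconc A B = A + shift (rowsZ A, colsZ A) B := by
  rw [dconc, rowsC_eq_rowsZ hA, colsC_eq_colsZ hA, zeroIns_iterate_zeroIns_iterate]

lemma EvZ.dconc {A B : ℕ × ℕ → V} (hA : EvZ A) (hB : EvZ B) : EvZ (dconc A B) := by
  rw [dconc_eq_add_shift hA]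
  exact hA.add (hB.shift _)

lemma rowsC_dconc {A B : ℕ × ℕ → V} (hA : EvZ A) (hB : EvZ B) :
    rowsC (dconc A B) = rowsC A + rowsC B := by
  rw [rowsC_eq_rowsZ (hA.dconc hB), dconc_eq_add_shift hA, rowsZ_add_shift hA hB,
    rowsC_eq_rowsZ hA, rowsC_eq_rowsZ hB]

lemma colsC_dconc {A B : ℕ × ℕ → V} (hA : EvZ A) (hB : EvZ B) :
    colsC (dconc A B) = colsC A + colsC B := by
  rw [colsC_eq_colsZ (hA.dconc hB), dconc_eq_add_shift hA, colsZ_add_shift hA hB,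
    colsC_eq_colsZ hA, colsC_eq_colsZ hB]

lemma dconc_assoc {A B : ℕ × ℕ → V} (hA : EvZ A) (hB : EvZ B) (C : ℕ × ℕ → V) :
    dconc (dconc A B) C = dconc A (dconc B C) := by
  rw [dconc_eq_add_shift (hA.dconc hB), dconc_eq_add_shift hA B, dconc_eq_add_shift hB,
    dconc_eq_add_shift hA,
    rowsZ_add_shift hA hB, colsZ_add_shift hA hB, shift_add, shift_shift, Prod.mk_add_mk,
    add_assoc]

lemma sigmaOp_dconc {A B : ℕ × ℕ → V} (hA : EvZ A) (hB : EvZ B) :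
    sigmaOp (dconc A B) = sigmaOp A + fun i => sigmaOp B (i - (rowsZ A, colsZ A)) := by
  rw [dconc_eq_add_shift hA, sigmaOp_add hA (hB.shift _), sigmaOp_shift]

lemma bconc_sigmaOp {A : ℕ × ℕ → V} (hA : EvZ A) (Y : ℕ × ℕ → V) :
    bconc (sigmaOp A) Y = sigmaOp A + fun i => Y (i - (rowsZ A, colsZ A)) := by
  rw [bconc, diffOp_sigmaOp hA, rowsC_eq_rowsZ hA.sigmaOp, colsC_eq_colsZ hA.sigmaOp,
    rowsZ_sigmaOp hA, colsZ_sigmaOp hA, warp_iterate_warp_iterate]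

end AddCommGroup

end TwoParam

open TwoParam in
theorem statement13_general {d : ℕ} {R : Type*} [CommRing R]
    (A B C : ℕ × ℕ → Fin d → R) (hA : EvZ A) (hB : EvZ B) :
    rowsC (dconc A B) = rowsC A + rowsC B ∧
    colsC (dconc A B) = colsC A + colsC B ∧
    dconc (dconc A B) C = dconc A (dconc B C) ∧
    sigmaOp (dconc A B) = bconc (sigmaOp A) (sigmaOp B) :=
  ⟨rowsC_dconc hA hB, colsC_dconc hA hB, dconc_assoc hA hB C,
    (sigmaOp_dconc hA hB).trans (bconc_sigmaOp hA _).symm⟩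

open TwoParam in
/-- size additivity, associativity of `⊘`, and compatibility
`ς(A ⊘ B) = ςA ⊠ ςB`. -/
theorem statement13 {d : ℕ} {R : Type*} [CommRing R] [IsDomain R]
    (A B C : ℕ × ℕ → Fin d → R) (hA : EvZ A) (hB : EvZ B) (hC : EvZ C) :
    rowsC (dconc A B) = rowsC A + rowsC B ∧
    colsC (dconc A B) = colsC A + colsC B ∧
    dconc (dconc A B) C = dconc A (dconc B C) ∧
    sigmaOp (dconc A B) = bconc (sigmaOp A) (sigmaOp B) :=
  statement13_general A B C hA hB
end

section
/- QSym is a free R-module, and the family of monomial quasisymmetric functions {M_a}, indexed by all ℕ₀-matrix compositions a (including M_e = 1 for the empty composition), is an R-module basis of QSym. -/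
open scoped Classical

/-! A monomial `m` determines a composition, its pattern, by deleting the empty rows and columns
of its exponent array; `m` is then `∏ x_{ι_s,κ_t}^{a_{s,t}}` for the pattern `a` and the chains
`ι`, `κ` of its non-empty rows and columns, and conversely such a monomial has pattern `a`. So
`M_a` is the indicator function of the monomials with pattern `a`. Evaluating at the standard
monomials `∏ x_{s,t}^{a_{s,t}}` gives linear independence, and a quasisymmetric `f` of degree
at most `D`, whose coefficients only depend on the pattern, is the finite sum of
`f(∏ x_{s,t}^{a_{s,t}}) • M_a` over the compositions `a` of weight at most `D`. -/

namespace Finset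

theorem card_eq_of_coe_eq_range {α : Type*} {s : Finset α} {n : ℕ} {ι : Fin n → α}
    (hι : ι.Injective) (hs : (s : Set α) = Set.range ι) : s.card = n := by
  rw [← Set.ncard_coe_finset, hs, Set.ncard_range_of_injective hι, Nat.card_eq_fintype_card,
    Fintype.card_fin]

theorem orderEmbOfFin_eq_of_coe_eq_range {α : Type*} [LinearOrder α] {s : Finset α} {n : ℕ}
    {ι : Fin n → α} (hι : StrictMono ι) (hs : (s : Set α) = Set.range ι) (i : Fin s.card) :
    s.orderEmbOfFin rfl i = ι (Fin.cast (card_eq_of_coe_eq_range hι.injective hs) i) := by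
  have hcard := card_eq_of_coe_eq_range hι.injective hs
  have hunique := orderEmbOfFin_unique hcard
    (fun x => by rw [← mem_coe, hs]; exact ⟨x, rfl⟩) hι
  calc s.orderEmbOfFin rfl i = s.orderEmbOfFin hcard (Fin.cast hcard i) :=
        orderEmbOfFin_eq_orderEmbOfFin_iff.mpr rfl
    _ = ι (Fin.cast hcard i) := (congrFun hunique _).symm

end Finset

namespace TwoParam

namespace NMat

theorem ext {a b : NMat} (hrows : a.rows = b.rows) (hcols : a.cols = b.cols)
    (hentry : a.entry = b.entry) : a = b := by
  cases a; cases b; subst hrows hcols hentry; rfl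

def wt (a : NMat) : ℕ := ∑ s : Fin a.rows, ∑ t : Fin a.cols, a.entry s t

theorem rows_le_wt {a : NMat} (ha : a.IsComp) : a.rows ≤ a.wt := by
  calc a.rows = ∑ _s : Fin a.rows, 1 := by simp
    _ ≤ a.wt := Finset.sum_le_sum fun s _ => by
        obtain ⟨j, hj, hne⟩ := ha.1 s s.isLt
        exact (Nat.one_le_iff_ne_zero.mpr hne).trans
          (Finset.single_le_sum (f := fun t : Fin a.cols => a.entry s t)
            (fun _ _ => Nat.zero_le _) (Finset.mem_univ ⟨j, hj⟩))

theorem cols_le_wt {a : NMat} (ha : a.IsComp) : a.cols ≤ a.wt := by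
  calc a.cols = ∑ _t : Fin a.cols, 1 := by simp
    _ ≤ ∑ t : Fin a.cols, ∑ s : Fin a.rows, a.entry s t := Finset.sum_le_sum fun t _ => by
        obtain ⟨i, hi, hne⟩ := ha.2 t t.isLt
        exact (Nat.one_le_iff_ne_zero.mpr hne).trans
          (Finset.single_le_sum (f := fun s : Fin a.rows => a.entry s t)
            (fun _ _ => Nat.zero_le _) (Finset.mem_univ ⟨i, hi⟩))
    _ = a.wt := Finset.sum_comm

theorem entry_le_wt (a : NMat) (i j : ℕ) : a.entry i j ≤ a.wt := by
  by_cases h : i < a.rows ∧ j < a.cols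
  · calc a.entry i j ≤ ∑ t : Fin a.cols, a.entry i t :=
          Finset.single_le_sum (f := fun t : Fin a.cols => a.entry i t)
            (fun _ _ => Nat.zero_le _) (Finset.mem_univ ⟨j, h.2⟩)
      _ ≤ a.wt :=
          Finset.single_le_sum (f := fun s : Fin a.rows => ∑ t : Fin a.cols, a.entry s t)
            (fun _ _ => Nat.zero_le _) (Finset.mem_univ ⟨i, h.1⟩)
  · simp [a.entry_eq_zero i j (by omega)]

-- Such a matrix is determined by its upper-left `D × D` block.
theorem finite_setOf_le (D : ℕ) :
    {a : NMat | a.rows ≤ D ∧ a.cols ≤ D ∧ ∀ i j, a.entry i j ≤ D}.Finite := by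
  let code : NMat → ℕ × ℕ × (Fin D × Fin D → ℕ) := fun a =>
    (a.rows, a.cols, fun p => a.entry p.1 p.2)
  refine Set.Finite.of_finite_image (f := code)
    ((Set.finite_Iic (D, D, fun _ => D)).subset ?_) ?_
  · rintro _ ⟨a, ⟨hr, hc, he⟩, rfl⟩
    exact ⟨hr, hc, fun p => he p.1 p.2⟩
  · rintro a ⟨har, hac, -⟩ b ⟨hbr, hbc, -⟩ hab
    simp only [code, Prod.mk.injEq, funext_iff, Prod.forall] at hab
    obtain ⟨hr, hc, he⟩ := hab
    refine ext hr hc (funext₂ fun i j => ?_)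
    by_cases h : i < D ∧ j < D
    · exact he ⟨i, h.1⟩ ⟨j, h.2⟩
    · rw [a.entry_eq_zero i j (by omega), b.entry_eq_zero i j (by omega)]

theorem finite_setOf_isComp_wt_le (D : ℕ) : {a : NMat | a.IsComp ∧ a.wt ≤ D}.Finite :=
  (finite_setOf_le D).subset fun _ ⟨ha, hD⟩ =>
    ⟨(rows_le_wt ha).trans hD, (cols_le_wt ha).trans hD, fun i j => (entry_le_wt _ i j).trans hD⟩

end NMat

theorem monomialOf_apply (a : NMat) (ι : Fin a.rows → ℕ) (κ : Fin a.cols → ℕ) (x y : ℕ) :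
    monomialOf a ι κ (x, y) = ∑ s, ∑ t, if ι s = x ∧ κ t = y then a.entry s t else 0 := by
  simp only [monomialOf, Finsupp.finsetSum_apply, Finsupp.single_apply, Prod.mk.injEq]

theorem monomialOf_apply_of_injective {a : NMat} {ι : Fin a.rows → ℕ} {κ : Fin a.cols → ℕ}
    (hι : ι.Injective) (hκ : κ.Injective) (s : Fin a.rows) (t : Fin a.cols) :
    monomialOf a ι κ (ι s, κ t) = a.entry s t := by
  rw [monomialOf_apply, Finset.sum_eq_single s, Finset.sum_eq_single t]
  · simp
  · intro t' _ ht'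
    simp [hκ.ne ht']
  · simp
  · intro s' _ hs'
    simp [hι.ne hs']
  · simp

theorem monomialOf_apply_eq_zero {a : NMat} {ι : Fin a.rows → ℕ} {κ : Fin a.cols → ℕ} {x y : ℕ}
    (h : x ∉ Set.range ι ∨ y ∉ Set.range κ) : monomialOf a ι κ (x, y) = 0 := by
  rw [monomialOf_apply]
  refine Finset.sum_eq_zero fun s _ => Finset.sum_eq_zero fun t _ => if_neg ?_
  rintro ⟨rfl, rfl⟩
  simp at h

theorem mdeg_monomialOf (a : NMat) (ι : Fin a.rows → ℕ) (κ : Fin a.cols → ℕ) :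
    mdeg (monomialOf a ι κ) = a.wt := by
  simp only [mdeg, monomialOf, NMat.wt]
  rw [← Finsupp.sum_finsetSum_index (fun _ => rfl) (fun _ _ _ => rfl)]
  refine Finset.sum_congr rfl fun s _ => ?_
  rw [← Finsupp.sum_finsetSum_index (fun _ => rfl) (fun _ _ _ => rfl)]
  exact Finset.sum_congr rfl fun t _ => Finsupp.sum_single_index rfl

noncomputable def rowSet (m : Mon) : Finset ℕ := m.support.image Prod.fst

noncomputable def colSet (m : Mon) : Finset ℕ := m.support.image Prod.snd

theorem mem_rowSet {m : Mon} {x : ℕ} : x ∈ rowSet m ↔ ∃ y, m (x, y) ≠ 0 := by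
  simp [rowSet]

theorem mem_colSet {m : Mon} {y : ℕ} : y ∈ colSet m ↔ ∃ x, m (x, y) ≠ 0 := by
  simp [colSet]

noncomputable def rowChain (m : Mon) : Fin (rowSet m).card ↪o ℕ := (rowSet m).orderEmbOfFin rfl

noncomputable def colChain (m : Mon) : Fin (colSet m).card ↪o ℕ := (colSet m).orderEmbOfFin rfl

theorem range_rowChain (m : Mon) : Set.range (rowChain m) = rowSet m :=
  Finset.range_orderEmbOfFin _ _

theorem range_colChain (m : Mon) : Set.range (colChain m) = colSet m :=
  Finset.range_orderEmbOfFin _ _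

/-- The pattern of `m`: the matrix obtained by deleting the empty rows and columns of the
exponent array of `m`. -/
noncomputable def pattern (m : Mon) : NMat where
  rows := (rowSet m).card
  cols := (colSet m).card
  entry i j :=
    if h : i < (rowSet m).card ∧ j < (colSet m).card then
      m (rowChain m ⟨i, h.1⟩, colChain m ⟨j, h.2⟩)
    else 0
  entry_eq_zero i j h := dif_neg (by omega)

theorem pattern_entry (m : Mon) (s : Fin (rowSet m).card) (t : Fin (colSet m).card) :
    (pattern m).entry s t = m (rowChain m s, colChain m t) :=
  dif_pos ⟨s.isLt, t.isLt⟩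

theorem pattern_isComp (m : Mon) : (pattern m).IsComp := by
  constructor
  · intro i hi
    obtain ⟨y, hy⟩ := mem_rowSet.mp ((rowSet m).orderEmbOfFin_mem rfl ⟨i, hi⟩)
    obtain ⟨t, rfl⟩ : y ∈ Set.range (colChain m) := by
      rw [range_colChain]; exact mem_colSet.mpr ⟨_, hy⟩
    exact ⟨t, t.isLt, by rwa [pattern_entry m ⟨i, hi⟩ t]⟩
  · intro j hj
    obtain ⟨x, hx⟩ := mem_colSet.mp ((colSet m).orderEmbOfFin_mem rfl ⟨j, hj⟩)
    obtain ⟨s, rfl⟩ : x ∈ Set.range (rowChain m) := by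
      rw [range_rowChain]; exact mem_rowSet.mpr ⟨_, hx⟩
    exact ⟨s, s.isLt, by rwa [pattern_entry m s ⟨j, hj⟩]⟩

theorem monomialOf_pattern (m : Mon) : monomialOf (pattern m) (rowChain m) (colChain m) = m := by
  ext ⟨x, y⟩
  by_cases hxy : x ∈ Set.range (rowChain m) ∧ y ∈ Set.range (colChain m)
  · obtain ⟨⟨s, rfl⟩, ⟨t, rfl⟩⟩ := hxy
    exact (monomialOf_apply_of_injective (a := pattern m) (rowChain m).injective
      (colChain m).injective s t).trans (pattern_entry m s t)
  · refine (monomialOf_apply_eq_zero (a := pattern m) (ι := rowChain m) (κ := colChain m)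
      (not_and_or.mp hxy)).trans ?_
    rw [eq_comm, ← Finsupp.notMem_support_iff]
    intro hmem
    rw [range_rowChain, range_colChain] at hxy
    exact hxy ⟨mem_rowSet.mpr ⟨y, Finsupp.mem_support_iff.mp hmem⟩,
      mem_colSet.mpr ⟨x, Finsupp.mem_support_iff.mp hmem⟩⟩

theorem rowSet_monomialOf {a : NMat} (ha : a.IsComp) {ι : Fin a.rows → ℕ} {κ : Fin a.cols → ℕ}
    (hι : ι.Injective) (hκ : κ.Injective) :
    (rowSet (monomialOf a ι κ) : Set ℕ) = Set.range ι := by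
  ext x
  rw [Finset.mem_coe, mem_rowSet]
  constructor
  · rintro ⟨y, hy⟩
    by_contra hx
    exact hy (monomialOf_apply_eq_zero (Or.inl hx))
  · rintro ⟨s, rfl⟩
    obtain ⟨j, hj, hne⟩ := ha.1 s s.isLt
    exact ⟨κ ⟨j, hj⟩, by rwa [monomialOf_apply_of_injective hι hκ]⟩

theorem colSet_monomialOf {a : NMat} (ha : a.IsComp) {ι : Fin a.rows → ℕ} {κ : Fin a.cols → ℕ}
    (hι : ι.Injective) (hκ : κ.Injective) :
    (colSet (monomialOf a ι κ) : Set ℕ) = Set.range κ := by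
  ext y
  rw [Finset.mem_coe, mem_colSet]
  constructor
  · rintro ⟨x, hx⟩
    by_contra hy
    exact hx (monomialOf_apply_eq_zero (Or.inr hy))
  · rintro ⟨t, rfl⟩
    obtain ⟨i, hi, hne⟩ := ha.2 t t.isLt
    exact ⟨ι ⟨i, hi⟩, by rwa [monomialOf_apply_of_injective hι hκ]⟩

theorem pattern_monomialOf {a : NMat} (ha : a.IsComp) {ι : Fin a.rows → ℕ} {κ : Fin a.cols → ℕ}
    (hι : StrictMono ι) (hκ : StrictMono κ) : pattern (monomialOf a ι κ) = a := by
  have hrow := rowSet_monomialOf ha hι.injective hκ.injective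
  have hcol := colSet_monomialOf ha hι.injective hκ.injective
  have hrows := Finset.card_eq_of_coe_eq_range hι.injective hrow
  have hcols := Finset.card_eq_of_coe_eq_range hκ.injective hcol
  refine NMat.ext hrows hcols (funext₂ fun i j => ?_)
  by_cases h : i < (rowSet (monomialOf a ι κ)).card ∧ j < (colSet (monomialOf a ι κ)).card
  · refine (pattern_entry _ ⟨i, h.1⟩ ⟨j, h.2⟩).trans ?_
    rw [rowChain, colChain, Finset.orderEmbOfFin_eq_of_coe_eq_range hι hrow,
      Finset.orderEmbOfFin_eq_of_coe_eq_range hκ hcol,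
      monomialOf_apply_of_injective hι.injective hκ.injective]
    rfl
  · exact ((pattern _).entry_eq_zero i j (by simp only [pattern]; omega)).trans
      (a.entry_eq_zero i j (by omega)).symm

theorem mdeg_eq_wt_pattern (m : Mon) : mdeg m = (pattern m).wt := by
  conv_lhs => rw [← monomialOf_pattern m]
  exact mdeg_monomialOf _ _ _

theorem monQ_apply {R : Type*} [CommRing R] {a : NMat} (ha : a.IsComp) (m : Mon) :
    monQ (R := R) a m = if pattern m = a then 1 else 0 := by
  refine if_congr ⟨?_, ?_⟩ rfl rfl
  · rintro ⟨ι, κ, hι, hκ, rfl⟩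
    exact pattern_monomialOf ha hι hκ
  · rintro rfl
    exact ⟨rowChain m, colChain m, (rowChain m).strictMono, (colChain m).strictMono,
      (monomialOf_pattern m).symm⟩

theorem monQ_isQSym {R : Type*} [CommRing R] {a : NMat} (ha : a.IsComp) :
    IsQSym (monQ (R := R) a) := by
  refine ⟨⟨a.wt, fun m hm => ?_⟩, fun b hb ι κ hι hκ => ?_⟩
  · rw [monQ_apply ha, ne_eq, ite_eq_right_iff, not_forall] at hm
    obtain ⟨rfl, -⟩ := hm
    exact (mdeg_eq_wt_pattern m).le
  · rw [monQ_apply ha, monQ_apply ha, pattern_monomialOf hb hι hκ,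
      pattern_monomialOf hb Fin.val_strictMono Fin.val_strictMono]

theorem IsQSym.apply_eq {R : Type*} [CommRing R] {f : Mon → R} (hf : IsQSym f) (m : Mon) :
    f m = f (monomialOf (pattern m) (fun s => (s : ℕ)) (fun t => (t : ℕ))) := by
  conv_lhs => rw [← monomialOf_pattern m]
  exact hf.2 _ (pattern_isComp m) _ _ (rowChain m).strictMono (colChain m).strictMono

theorem linearIndependent_monQ (R : Type*) [CommRing R] :
    LinearIndependent R (fun a : {a : NMat // a.IsComp} => monQ (R := R) a.1) := by
  refine LinearIndependent.of_comp (LinearMap.funLeft R R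
    fun b : {a : NMat // a.IsComp} => monomialOf b.1 (fun s => (s : ℕ)) (fun t => (t : ℕ))) ?_
  convert Pi.linearIndependent_single_one {a : NMat // a.IsComp} R with a
  ext b
  simp only [Function.comp_apply, LinearMap.funLeft_apply, Pi.single_apply, monQ_apply a.2,
    pattern_monomialOf b.2 Fin.val_strictMono Fin.val_strictMono, Subtype.ext_iff]

theorem IsQSym.mem_span_monQ {R : Type*} [CommRing R] {f : Mon → R} (hf : IsQSym f) :
    f ∈ Submodule.span R (Set.range fun a : {a : NMat // a.IsComp} => monQ (R := R) a.1) := by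
  obtain ⟨D, hD⟩ := hf.1
  set T := (NMat.finite_setOf_isComp_wt_le D).toFinset
  have hsum : f = ∑ a ∈ T, f (monomialOf a (fun s => (s : ℕ)) (fun t => (t : ℕ))) • monQ a := by
    ext m
    simp only [Finset.sum_apply, Pi.smul_apply, smul_eq_mul]
    rw [Finset.sum_congr rfl fun a ha => by
      rw [monQ_apply ((Set.Finite.mem_toFinset _).mp ha).1, mul_ite, mul_one, mul_zero],
      Finset.sum_ite_eq, ← hf.apply_eq]
    split_ifs with hm
    · rfl
    · by_contra hne
      exact hm ((Set.Finite.mem_toFinset _).mpr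
        ⟨pattern_isComp m, mdeg_eq_wt_pattern m ▸ hD m hne⟩)
  rw [hsum]
  exact Submodule.sum_mem _ fun a ha => Submodule.smul_mem _ _
    (Submodule.subset_span ⟨⟨a, ((Set.Finite.mem_toFinset _).mp ha).1⟩, rfl⟩)

end TwoParam

open TwoParam in
theorem statement16_general (R : Type*) [CommRing R] :
    LinearIndependent R
        (fun a : {a : NMat // a.IsComp} => monQ (R := R) a.1) ∧
      Submodule.span R
          (Set.range fun a : {a : NMat // a.IsComp} => monQ (R := R) a.1) =
        QSymSub R := by
  refine ⟨linearIndependent_monQ R, le_antisymm ?_ fun f hf => IsQSym.mem_span_monQ hf⟩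
  rw [Submodule.span_le]
  rintro _ ⟨a, rfl⟩
  exact monQ_isQSym a.2

open TwoParam in
/-- `QSym` is a free `R`-module with the monomial
quasisymmetric functions, indexed by `ℕ₀`-matrix compositions, as basis. -/
theorem statement16 (R : Type*) [CommRing R] [IsDomain R] :
    LinearIndependent R
        (fun a : {a : NMat // a.IsComp} => monQ (R := R) a.1) ∧
      Submodule.span R
          (Set.range fun a : {a : NMat // a.IsComp} => monQ (R := R) a.1) =
        QSymSub R :=
  statement16_general R
end
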